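/- Descent-type decrease for the projected gradient step on a quadratic model: let m(w) = ⟨d, w − x⟩ + (1/2)⟨w − x, B(w − x)⟩ with ‖B‖ ≤ B̂, and let z = P_C(x − α∇m(x)) = P_C(x − αd) for x ∈ C closed convex. If 0 < α ≤ (1 − ν₀)/B̂ with ν₀ ∈ (0,1), then m(z) ≤ m(x) + ν₀⟨d, z − x⟩. -/
import Mathlib


open RealInnerProductSpace

/-- `p` is the (nearest-point) Euclidean projection of `z` onto `C`. -/
def IsProjOn {m : ℕ} (C : Set (EuclideanSpace ℝ (Fin m))) (z p : EuclideanSpace ℝ (Fin m)) : Prop :=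
  p ∈ C ∧ ∀ w ∈ C, ‖z - p‖ ≤ ‖z - w‖

/-- Sufficient decrease of the projected gradient step on a quadratic model. -/
theorem proj_grad_step_sufficient_decrease {n : ℕ}
    (C : Set (EuclideanSpace ℝ (Fin n))) (hC_ne : C.Nonempty)
    (hC_closed : IsClosed C) (hC_convex : Convex ℝ C)
    (x d z : EuclideanSpace ℝ (Fin n)) (hx : x ∈ C)
    (B : EuclideanSpace ℝ (Fin n) →L[ℝ] EuclideanSpace ℝ (Fin n))
    (hB_symm : IsSelfAdjoint B) (Bhat : ℝ) (hBhat : 0 < Bhat) (hB_norm : ‖B‖ ≤ Bhat)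
    (mdl : EuclideanSpace ℝ (Fin n) → ℝ)
    (hmdl : ∀ w, mdl w = ⟪d, w - x⟫ + (1 / 2) * ⟪w - x, B (w - x)⟫)
    (ν₀ : ℝ) (hν₀ : ν₀ ∈ Set.Ioo (0 : ℝ) 1)
    (α : ℝ) (hα : 0 < α) (hα_le : α ≤ (1 - ν₀) / Bhat)
    (hz : IsProjOn C (x - α • d) z) :
    mdl z ≤ mdl x + ν₀ * ⟪d, z - x⟫ := by
  obtain ⟨hzC, hzmin⟩ := hz
  set u := x - α • d with hu
  -- projection characterization
  have : Nonempty C := ⟨⟨z, hzC⟩⟩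
  have hinf : ‖u - z‖ = ⨅ w : C, ‖u - w‖ := by
    apply le_antisymm
    · exact le_ciInf fun w => hzmin w w.2
    · exact ciInf_le ⟨0, fun r ⟨w, hw⟩ => hw ▸ norm_nonneg _⟩ (⟨z, hzC⟩ : C)
  have hproj : ∀ w ∈ C, ⟪u - z, w - z⟫ ≤ 0 :=
    (norm_eq_iInf_iff_real_inner_le_zero hC_convex hzC).mp hinf
  have hxineq := hproj x hx
  set v := z - x with hv
  have huz : u - z = -v - α • d := by
    simp only [hu, hv]; abel
  have hxz : x - z = -v := by simp only [hv]; abel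
  rw [huz, hxz] at hxineq
  have hkey : α * ⟪d, v⟫ ≤ -‖v‖ ^ 2 := by
    have := hxineq
    simp only [inner_sub_left, inner_neg_left, inner_neg_right, inner_smul_left,
      real_inner_self_eq_norm_sq, RCLike.ofReal_real_eq_id, id_eq, conj_trivial] at this
    have hdv : ⟪d, v⟫ = ⟪v, d⟫ := real_inner_comm _ _
    nlinarith [this]
  have hq : ⟪v, B v⟫ ≤ Bhat * ‖v‖ ^ 2 := by
    calc ⟪v, B v⟫ ≤ ‖v‖ * ‖B v‖ := real_inner_le_norm _ _
      _ ≤ ‖v‖ * (‖B‖ * ‖v‖) := by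
          have := B.le_opNorm v
          nlinarith [norm_nonneg v]
      _ ≤ Bhat * ‖v‖ ^ 2 := by nlinarith [norm_nonneg v]
  have hmx : mdl x = 0 := by simp [hmdl]
  rw [hmdl, hmx, hv]
  obtain ⟨hν1, hν2⟩ := hν₀
  have hαB : α * Bhat ≤ 1 - ν₀ := (le_div_iff₀ hBhat).mp hα_le
  nlinarith [mul_le_mul_of_nonneg_left hkey (by linarith : (0:ℝ) ≤ 1 - ν₀),
    mul_le_mul_of_nonneg_left hq (le_of_lt hα),
    mul_le_mul_of_nonneg_right hαB (sq_nonneg ‖v‖), sq_nonneg ‖v‖, hα.le]
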